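/- arXiv:2302.06974 — 2 statements merged into one kernel-verified Lean document; each statement's English description precedes it below -/
import Mathlib

section
/- Let n be an integer and let S be the verbal subgroup of BS(1,n) generated by all squares. Then every element of S is a product of at most 2 squares; that is, the verbal width of S is at most 2. -/
/-!
Let `A` be the subgroup generated by the conjugates `aₖ = tᵏ a t⁻ᵏ`. Any two `aₖ` are powers of
a common one, so `A` is abelian; `t` normalizes `A`, so every `x` is `tᵇ w` with `w ∈ A`, and
`x² = t²ᵇ · (t⁻ᵇ w tᵇ) w`. As `A` is abelian, `w ↦ (c w c⁻¹) w` is an endomorphism of `A` for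
every power `c` of `t`; on generators it gives `aⱼ ^ (nᵉ + 1)`, which is a square in `A`: for odd
`n` the exponent is even, for even `n` already `aⱼ = aⱼ₊₁ ^ n` is. So every square lies in
`{(tᵇ)² y² | y ∈ A}`, and this set is a subgroup, again because `t` normalizes the abelian `A`.
-/

/-- Relators of the Baumslag–Solitar group BS(1,n) = ⟨a,t | t⁻¹ a t = aⁿ⟩,
with `false` standing for `a` and `true` for `t`. -/
def BSrels (n : ℤ) : Set (FreeGroup Bool) :=
  {(FreeGroup.of true)⁻¹ * FreeGroup.of false * FreeGroup.of true *
    (FreeGroup.of false ^ n)⁻¹}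

/-- The Baumslag–Solitar group BS(1,n). -/
abbrev BS (n : ℤ) := PresentedGroup (BSrels n)

open Subgroup

section Normalizer

variable {G : Type*} [Group G] {A : Subgroup G} {t : G}

theorem Subgroup.exists_zpow_mul_of_sup_eq_top (ht : t ∈ normalizer A)
    (hgen : zpowers t ⊔ A = ⊤) (x : G) : ∃ b : ℤ, ∃ w ∈ A, x = t ^ b * w := by
  have hx : x ∈ ((zpowers t ⊔ A : Subgroup G) : Set G) := by simp [hgen]
  rw [coe_mul_of_left_le_normalizer_right _ _ (zpowers_le.2 ht)] at hx
  obtain ⟨_, ⟨b, rfl⟩, w, hw, rfl⟩ := hx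
  exact ⟨b, w, hw, rfl⟩

theorem Subgroup.exists_pow_eq_conj_mul_self_of_mem_closure {X : Set G} {m : ℕ} {c : G}
    [IsMulCommutative (closure X)] (hc : c ∈ normalizer (closure X : Set G))
    (hX : ∀ x ∈ X, ∃ y ∈ closure X, c * x * c⁻¹ * x = y ^ m) {w : G} (hw : w ∈ closure X) :
    ∃ y ∈ closure X, c * w * c⁻¹ * w = y ^ m := by
  have hconj {x : G} (hx : x ∈ closure X) : c * x * c⁻¹ ∈ closure X :=
    (mem_normalizer_iff.mp hc x).mp hx
  induction hw using closure_induction with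
  | mem x hx => exact hX x hx
  | one => exact ⟨1, one_mem _, by simp⟩
  | mul x z hx hz ihx ihz =>
    obtain ⟨y, hy, hxy⟩ := ihx
    obtain ⟨y', hy', hzy⟩ := ihz
    refine ⟨y * y', mul_mem hy hy', ?_⟩
    rw [Commute.mul_pow (setLike_mul_comm hy hy'), ← hxy, ← hzy]
    calc c * (x * z) * c⁻¹ * (x * z) = (c * x * c⁻¹) * ((c * z * c⁻¹) * x) * z := by group
      _ = (c * x * c⁻¹) * (x * (c * z * c⁻¹)) * z := by rw [setLike_mul_comm (hconj hz) hx]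
      _ = c * x * c⁻¹ * x * (c * z * c⁻¹ * z) := by group
  | inv x hx ihx =>
    obtain ⟨y, hy, hxy⟩ := ihx
    refine ⟨y⁻¹, inv_mem hy, ?_⟩
    rw [inv_pow, ← hxy]
    calc c * x⁻¹ * c⁻¹ * x⁻¹ = (x * (c * x * c⁻¹))⁻¹ := by group
      _ = (c * x * c⁻¹ * x)⁻¹ := by rw [setLike_mul_comm hx (hconj hx)]

variable [IsMulCommutative A]

theorem Subgroup.exists_zpow_mul_pow_of_mem_closure_pow {m : ℕ} (ht : t ∈ normalizer A)
    (hpow : ∀ x : G, ∃ b : ℤ, ∃ y ∈ A, x ^ m = (t ^ b) ^ m * y ^ m) {g : G}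
    (hg : g ∈ closure {s | ∃ x : G, s = x ^ m}) :
    ∃ b : ℤ, ∃ y ∈ A, g = (t ^ b) ^ m * y ^ m := by
  induction hg using closure_induction with
  | mem s hs => obtain ⟨x, rfl⟩ := hs; exact hpow x
  | one => exact ⟨0, 1, one_mem A, by simp⟩
  | mul g h _ _ ihg ihh =>
    obtain ⟨b, y, hy, rfl⟩ := ihg
    obtain ⟨c, z, hz, rfl⟩ := ihh
    have hy' : (t ^ (-c)) ^ m * y * ((t ^ (-c)) ^ m)⁻¹ ∈ A :=
      (mem_normalizer_iff.mp (pow_mem (zpow_mem ht _) m) y).mp hy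
    refine ⟨b + c, _ * z, mul_mem hy' hz, ?_⟩
    rw [Commute.mul_pow (setLike_mul_comm hy' hz), conj_pow]
    group
  | inv g _ ih =>
    obtain ⟨b, y, hy, rfl⟩ := ih
    have hy' : (t ^ b) ^ m * y⁻¹ * ((t ^ b) ^ m)⁻¹ ∈ A :=
      (mem_normalizer_iff.mp (pow_mem (zpow_mem ht b) m) _).mp (inv_mem hy)
    refine ⟨-b, _, hy', ?_⟩
    rw [conj_pow]
    group

end Normalizer

namespace BS

variable (n : ℤ)

def a : BS n := PresentedGroup.of false

def t : BS n := PresentedGroup.of true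

theorem t_inv_mul_a_mul_t : (t n)⁻¹ * a n * t n = a n ^ n := by
  have h := PresentedGroup.mk_eq_mk_of_mul_inv_mem (rels := BSrels n)
    (x := (FreeGroup.of true)⁻¹ * FreeGroup.of false * FreeGroup.of true)
    (y := FreeGroup.of false ^ n) rfl
  simp only [map_mul, map_inv, map_zpow] at h
  exact h

/-- In the model `ℤ[1/n] ⋊ ℤ`, `conjA n k` is `n ^ (-k)` and `A n` is `ℤ[1/n]`. -/
def conjA (k : ℤ) : BS n := t n ^ k * a n * (t n ^ k)⁻¹

theorem zpow_mul_conjA_mul_inv (b k : ℤ) :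
    t n ^ b * conjA n k * (t n ^ b)⁻¹ = conjA n (b + k) := by
  rw [conjA, conjA, zpow_add]; group

theorem conjA_sub_one (k : ℤ) : conjA n (k - 1) = conjA n k ^ n := by
  rw [conjA, conjA, conj_zpow, ← t_inv_mul_a_mul_t]; group

theorem conjA_sub_natCast (k : ℤ) (m : ℕ) : conjA n (k - m) = conjA n k ^ (n ^ m) := by
  induction m with
  | zero => simp
  | succ m ih => rw [Nat.cast_succ, ← sub_sub, conjA_sub_one, ih, ← zpow_mul, pow_succ]

theorem conjA_eq_zpow_of_le {j k : ℤ} (h : j ≤ k) :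
    conjA n j = conjA n k ^ (n ^ (k - j).toNat) := by
  rw [← conjA_sub_natCast, Int.toNat_of_nonneg (sub_nonneg.2 h), sub_sub_cancel]

theorem commute_conjA (j k : ℤ) : Commute (conjA n j) (conjA n k) := by
  wlog h : j ≤ k generalizing j k
  · exact (this k j (le_of_not_ge h)).symm
  rw [conjA_eq_zpow_of_le n h]
  exact (Commute.refl _).zpow_left _

abbrev A : Subgroup (BS n) := closure (Set.range (conjA n))

instance : IsMulCommutative (A n) :=
  isMulCommutative_closure (by rintro _ ⟨j, rfl⟩ _ ⟨k, rfl⟩; exact commute_conjA n j k)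

theorem conjA_mem_A (k : ℤ) : conjA n k ∈ A n := subset_closure ⟨k, rfl⟩

theorem zpow_mul_mul_inv_mem_A (b : ℤ) {w : BS n} (hw : w ∈ A n) :
    t n ^ b * w * (t n ^ b)⁻¹ ∈ A n := by
  suffices A n ≤ (A n).comap (MulAut.conj (t n ^ b)).toMonoidHom from this hw
  refine (closure_le _).2 ?_
  rintro _ ⟨k, rfl⟩
  show t n ^ b * conjA n k * (t n ^ b)⁻¹ ∈ A n
  exact zpow_mul_conjA_mul_inv n b k ▸ conjA_mem_A n (b + k)

theorem t_mem_normalizer_A : t n ∈ normalizer (A n : Set (BS n)) := by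
  refine mem_normalizer_iff.2 fun w ↦ ⟨fun hw ↦ by simpa using zpow_mul_mul_inv_mem_A n 1 hw,
    fun hw ↦ ?_⟩
  simpa [mul_assoc] using zpow_mul_mul_inv_mem_A n (-1) hw

theorem zpowers_t_sup_A : zpowers (t n) ⊔ A n = ⊤ := by
  refine eq_top_iff.2 fun x _ ↦ PresentedGroup.generated_by _ _ (fun i ↦ ?_) x
  cases i
  · exact mem_sup_right (show a n ∈ A n by simpa [conjA] using conjA_mem_A n 0)
  · exact mem_sup_left (mem_zpowers _)

theorem exists_conjA_add_mul_conjA_eq_zpow (b k : ℤ) :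
    ∃ j : ℤ, ∃ e : ℕ, conjA n (b + k) * conjA n k = conjA n j ^ (n ^ e + 1) := by
  rcases le_or_gt 0 b with hb | hb
  · refine ⟨b + k, (b + k - k).toNat, ?_⟩
    rw [conjA_eq_zpow_of_le n (show k ≤ b + k by omega), ← zpow_one_add, add_comm 1]
  · refine ⟨k, (k - (b + k)).toNat, ?_⟩
    rw [conjA_eq_zpow_of_le n (by omega : b + k ≤ k), zpow_add_one]

theorem exists_sq_eq_conjA_zpow (j : ℤ) (e : ℕ) :
    ∃ y ∈ A n, conjA n j ^ (n ^ e + 1) = y ^ 2 := by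
  rcases Int.even_or_odd n with ⟨s, hs⟩ | hodd
  · have hj : conjA n j = conjA n (j + 1) ^ n := by simpa using conjA_sub_one n (j + 1)
    refine ⟨conjA n (j + 1) ^ (s * (n ^ e + 1)), zpow_mem (conjA_mem_A n _) _, ?_⟩
    rw [hj, ← zpow_mul, ← zpow_natCast, ← zpow_mul, hs]
    ring_nf
  · obtain ⟨r, hr⟩ : Even (n ^ e + 1) := hodd.pow.add_one
    refine ⟨conjA n j ^ r, zpow_mem (conjA_mem_A n _) _, ?_⟩
    rw [hr, ← zpow_natCast, ← zpow_mul]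
    ring_nf

theorem exists_sq_eq_conj_mul_self (b : ℤ) {w : BS n} (hw : w ∈ A n) :
    ∃ y ∈ A n, t n ^ b * w * (t n ^ b)⁻¹ * w = y ^ 2 := by
  refine exists_pow_eq_conj_mul_self_of_mem_closure (zpow_mem (t_mem_normalizer_A n) b) ?_ hw
  rintro _ ⟨k, rfl⟩
  obtain ⟨j, e, h⟩ := exists_conjA_add_mul_conjA_eq_zpow n b k
  rw [zpow_mul_conjA_mul_inv, h]
  exact exists_sq_eq_conjA_zpow n j e

theorem exists_sq_eq_sq_mul_sq (x : BS n) :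
    ∃ b : ℤ, ∃ y ∈ A n, x ^ 2 = (t n ^ b) ^ 2 * y ^ 2 := by
  obtain ⟨b, w, hw, rfl⟩ :=
    exists_zpow_mul_of_sup_eq_top (t_mem_normalizer_A n) (zpowers_t_sup_A n) x
  obtain ⟨y, hy, h⟩ := exists_sq_eq_conj_mul_self n (-b) hw
  refine ⟨b, y, hy, ?_⟩
  rw [← h, sq, sq]
  group

end BS

/-- Every element of the verbal subgroup of squares of BS(1,n) is a product of
at most two squares: the verbal width of the subgroup of squares is at most 2. -/
theorem stmt_4 (n : ℤ) (g : BS n)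
    (hg : g ∈ Subgroup.closure {s : BS n | ∃ x : BS n, s = x ^ 2}) :
    ∃ x y : BS n, g = x ^ 2 * y ^ 2 := by
  obtain ⟨b, y, -, rfl⟩ := exists_zpow_mul_pow_of_mem_closure_pow (BS.t_mem_normalizer_A n)
    (BS.exists_sq_eq_sq_mul_sq n) hg
  exact ⟨BS.t n ^ b, y, rfl⟩
end

section
/- Let n be an integer, and let c₁ = (α₁,β₁), ..., c_k = (α_k,β_k) ∈ ℤ[1/n] ⋊ ℤ ≅ BS(1,n) with Σβ_i even, and set β_x = −(1/2)Σ_{i=1}^k β_i, β = gcd(|β₁|,...,|β_k|), K = gcd(n^{|β_x|}+1, n^β−1). The equation x² ∏_{i=1}^k z_i⁻¹ c_i z_i = 1 has a solution in BS(1,n) if and only if Σβ_i ≡ 0 (mod 2) and there exist integers x₁, ..., x_k with α₁n^{x₁} + ... + α_kn^{x_k} ≡ 0 (mod K). -/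
/-!
Write elements of BS(1,n) as pairs `(a, b) ∈ ℤ[1/n] × ℤ`. Conjugating `c = (α, β)` by `w = (v, y)`
gives `(n ^ y * (α + v * (n ^ (-β) - 1)), β)`, so as the `zᵢ` vary, `∏ zᵢ⁻¹ cᵢ zᵢ` runs exactly
over the elements `(∑ n ^ xᵢ * (αᵢ + vᵢ * (n ^ (-βᵢ) - 1)), ∑ βᵢ)` with `xᵢ ∈ ℤ`, `vᵢ ∈ ℤ[1/n]`.
Since `x² = (x₁ * (1 + n ^ (-x₂)), 2 x₂)`, the equation is solvable iff `x₂ = β_x` and some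
`∑ αᵢ n ^ xᵢ` lies in the ideal of `ℤ[1/n]` generated by `1 + n ^ (-β_x)` and the `n ^ (-βᵢ) - 1`.
Up to the units `n ^ t` these generators are the integers `n ^ |β_x| + 1` and `n ^ |βᵢ| - 1`, and
already in `ℤ` the ideal `(n ^ a₁ - 1, …, n ^ aₖ - 1)` is `(n ^ gcd aᵢ - 1)` by the Euclidean
algorithm on the exponents; hence the ideal is `(K)`.

For `n = 0` the encoding `inZinv 0` holds for every rational, so both sides are true.
-/

/-- Multiplication in ℤ[1/n] ⋊ ℤ ≅ BS(1,n) (realized inside ℚ × ℤ):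
`(α₁,β₁)(α₂,β₂) = (α₁ + n^{-β₁}α₂, β₁+β₂)`. -/
def bsMul (n : ℤ) (p q : ℚ × ℤ) : ℚ × ℤ :=
  (p.1 + (n : ℚ) ^ (-p.2) * q.1, p.2 + q.2)

/-- Inversion in ℤ[1/n] ⋊ ℤ: `(v, y)⁻¹ = (-n^y v, -y)`. -/
def bsInv (n : ℤ) (p : ℚ × ℤ) : ℚ × ℤ := (-(n : ℚ) ^ p.2 * p.1, -p.2)

/-- Membership of a rational number in the subring ℤ[1/n] of ℚ. -/
def inZinv (n : ℤ) (v : ℚ) : Prop := ∃ (m : ℤ) (e : ℕ), v * (n : ℚ) ^ e = m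

theorem Ideal.span_pair_pow_sub_one {R : Type*} [CommRing R] (x : R) (a b : ℕ) :
    Ideal.span {x ^ a - 1, x ^ b - 1} = Ideal.span {x ^ Nat.gcd a b - 1} := by
  induction a, b using Nat.gcd.induction with
  | H0 b => simp
  | H1 a b _ ih =>
    rw [Nat.gcd_rec, ← ih]
    obtain ⟨c, hc⟩ : x ^ a - 1 ∣ x ^ (a * (b / a)) - 1 := by
      simpa [pow_mul] using sub_dvd_pow_sub_pow (x ^ a) 1 (b / a)
    have hb : x ^ b - 1 = x ^ (b % a) * c * (x ^ a - 1) + (x ^ (b % a) - 1) := by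
      rw [mul_assoc, mul_comm c, ← hc, ← Nat.mod_add_div b a, pow_add, Nat.mod_add_div]
      ring
    apply le_antisymm <;> rw [Ideal.span_le, Set.insert_subset_iff, Set.singleton_subset_iff] <;>
      refine ⟨?_, ?_⟩ <;> simp only [SetLike.mem_coe, Ideal.mem_span_pair]
    · exact ⟨0, 1, by ring⟩
    · exact ⟨1, x ^ (b % a) * c, by linear_combination -hb⟩
    · exact ⟨-(x ^ (b % a) * c), 1, by linear_combination hb⟩
    · exact ⟨1, 0, by ring⟩

theorem Ideal.span_image_pow_sub_one {R ι : Type*} [CommRing R] (x : R) (f : ι → ℕ)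
    (s : Finset ι) :
    Ideal.span ((fun i => x ^ f i - 1) '' s) = Ideal.span {x ^ s.gcd f - 1} := by
  classical
  induction s using Finset.induction_on with
  | empty => simp
  | insert a s _ ih =>
    rw [Finset.coe_insert, Set.image_insert_eq, Ideal.span_insert, ih, ← Ideal.span_insert,
      Ideal.span_pair_pow_sub_one, Finset.gcd_insert]
    rfl

theorem Int.span_insert_range_pow_sub_one {ι : Type*} [Fintype ι] (a n : ℤ) (f : ι → ℕ) :
    Ideal.span (insert a (Set.range fun i => n ^ f i - 1)) =
      Ideal.span {((Int.gcd a (n ^ Finset.univ.gcd f - 1) : ℕ) : ℤ)} := by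
  rw [Ideal.span_insert, ← Set.image_univ, ← Finset.coe_univ, Ideal.span_image_pow_sub_one,
    ← Ideal.span_insert, Int.coe_gcd, span_gcd]

theorem Subring.span_intCast_image_eq {A : Type*} [CommRing A] (S : Subring A) {s t : Set ℤ}
    (h : Ideal.span s = Ideal.span t) :
    Submodule.span S ((Int.cast : ℤ → A) '' s) = Submodule.span S ((Int.cast : ℤ → A) '' t) := by
  have hspan : ∀ u : Set ℤ, Submodule.span S ((Int.cast : ℤ → A) '' u) =
      Submodule.span S (Submodule.map (Algebra.linearMap ℤ A) (Ideal.span u) : Set A) := by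
    intro u
    rw [Ideal.span, Submodule.map_span, Submodule.span_span_of_tower]
    rfl
  rw [hspan, hspan, h]

theorem Subring.mul_mem_span {A : Type*} [CommRing A] (S : Subring A) {s : Set A} {a g : A}
    (ha : a ∈ S) (hg : g ∈ s) : a * g ∈ Submodule.span S s :=
  Submodule.smul_mem _ (⟨a, ha⟩ : S) (Submodule.subset_span hg)

theorem Subring.mem_span_singleton_iff {A : Type*} [CommRing A] (S : Subring A) {v g : A} :
    v ∈ Submodule.span S {g} ↔ ∃ γ ∈ S, v = γ * g := by
  simp only [Submodule.mem_span_singleton, Subtype.exists, Subring.smul_def, smul_eq_mul,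
    exists_prop]
  exact exists_congr fun γ => and_congr_right fun _ => eq_comm

def zInvSubring (n : ℤ) : Subring ℚ where
  carrier := {v | inZinv n v}
  zero_mem' := ⟨0, 0, by simp⟩
  one_mem' := ⟨1, 0, by simp⟩
  add_mem' := by
    rintro a b ⟨m₁, e₁, h₁⟩ ⟨m₂, e₂, h₂⟩
    refine ⟨m₁ * n ^ e₂ + m₂ * n ^ e₁, e₁ + e₂, ?_⟩
    push_cast
    linear_combination (n : ℚ) ^ e₂ * h₁ + (n : ℚ) ^ e₁ * h₂
  mul_mem' := by
    rintro a b ⟨m₁, e₁, h₁⟩ ⟨m₂, e₂, h₂⟩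
    refine ⟨m₁ * m₂, e₁ + e₂, ?_⟩
    push_cast
    linear_combination (b * (n : ℚ) ^ e₂) * h₁ + (m₁ : ℚ) * h₂
  neg_mem' := by
    rintro a ⟨m, e, h⟩
    exact ⟨-m, e, by push_cast; linear_combination -h⟩

theorem inZinv_zero (v : ℚ) : inZinv 0 v := ⟨0, 1, by simp⟩

namespace zInvSubring

variable {n : ℤ}

local notation "R" => zInvSubring n

theorem zpow_mem (hn : n ≠ 0) (t : ℤ) : (n : ℚ) ^ t ∈ R := by
  obtain ⟨e, rfl | rfl⟩ := Int.eq_nat_or_neg t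
  · exact_mod_cast intCast_mem R (n ^ e)
  · refine ⟨1, e, ?_⟩
    have : (n : ℚ) ≠ 0 := by exact_mod_cast hn
    simp [this]

theorem isUnit_zpow (hn : n ≠ 0) (t : ℤ) : IsUnit (⟨(n : ℚ) ^ t, zpow_mem hn t⟩ : R) := by
  refine IsUnit.of_mul_eq_one ⟨(n : ℚ) ^ (-t), zpow_mem hn (-t)⟩ ?_
  have : (n : ℚ) ≠ 0 := by exact_mod_cast hn
  ext
  simp [zpow_neg, mul_inv_cancel₀ (zpow_ne_zero t this)]

theorem span_singleton_zpow_mul (hn : n ≠ 0) (t : ℤ) (v : ℚ) :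
    Submodule.span R {(n : ℚ) ^ t * v} = Submodule.span R {v} :=
  Submodule.span_singleton_smul_eq (isUnit_zpow hn t) v

theorem span_singleton_one_add_zpow_neg (hn : n ≠ 0) (m : ℤ) :
    Submodule.span R {1 + (n : ℚ) ^ (-m)} = Submodule.span R {((n ^ m.natAbs + 1 : ℤ) : ℚ)} := by
  have hn' : (n : ℚ) ≠ 0 := by exact_mod_cast hn
  obtain ⟨e, rfl | rfl⟩ := Int.eq_nat_or_neg m
  · conv_rhs => rw [← span_singleton_zpow_mul hn (-e)]
    congr 2
    push_cast
    rw [zpow_neg, Int.natAbs_natCast, zpow_natCast]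
    field_simp
  · simp [add_comm]

theorem span_singleton_zpow_neg_sub_one (hn : n ≠ 0) (m : ℤ) :
    Submodule.span R {(n : ℚ) ^ (-m) - 1} = Submodule.span R {((n ^ m.natAbs - 1 : ℤ) : ℚ)} := by
  have hn' : (n : ℚ) ≠ 0 := by exact_mod_cast hn
  obtain ⟨e, rfl | rfl⟩ := Int.eq_nat_or_neg m
  · conv_rhs => rw [← Submodule.span_neg, Set.neg_singleton, ← span_singleton_zpow_mul hn (-e)]
    congr 2
    push_cast
    rw [zpow_neg, Int.natAbs_natCast, zpow_natCast]
    field_simp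
    ring
  · simp

theorem span_insert_range_eq_span_gcd (hn : n ≠ 0) (m : ℤ) {ι : Type*} [Fintype ι] (b : ι → ℤ) :
    Submodule.span R (insert (1 + (n : ℚ) ^ (-m)) (Set.range fun i => (n : ℚ) ^ (-b i) - 1)) =
      Submodule.span R {((Int.gcd (n ^ m.natAbs + 1)
        (n ^ (Finset.univ.gcd fun i => (b i).natAbs) - 1) : ℕ) : ℚ)} := by
  have hgcd := Subring.span_intCast_image_eq R
    (Int.span_insert_range_pow_sub_one (n ^ m.natAbs + 1) n fun i => (b i).natAbs)
  rw [Set.image_insert_eq, ← Set.range_comp, Set.image_singleton] at hgcd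
  rw [← Int.cast_natCast, ← hgcd, Submodule.span_insert, Submodule.span_insert,
    span_singleton_one_add_zpow_neg hn, Submodule.span_range_eq_iSup, Submodule.span_range_eq_iSup]
  simp_rw [span_singleton_zpow_neg_sub_one hn]
  rfl

end zInvSubring

def bsConj (n : ℤ) (w c : ℚ × ℤ) : ℚ × ℤ := bsMul n (bsMul n (bsInv n w) c) w

def conjProd (n : ℤ) {k : ℕ} (c z : Fin k → ℚ × ℤ) : ℚ × ℤ :=
  (List.ofFn fun i => bsConj n (z i) (c i)).foldr (bsMul n) (0, 0)

section

variable {n : ℤ}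

theorem bsMul_self (p : ℚ × ℤ) : bsMul n p p = (p.1 * (1 + (n : ℚ) ^ (-p.2)), p.2 + p.2) := by
  simp only [bsMul, Prod.mk.injEq, and_true]
  ring

theorem bsMul_eq_zero_iff (hn : n ≠ 0) (p q : ℚ × ℤ) :
    bsMul n p q = (0, 0) ↔ q.1 = -(n : ℚ) ^ p.2 * p.1 ∧ q.2 = -p.2 := by
  have hn' : (n : ℚ) ^ p.2 ≠ 0 := zpow_ne_zero _ (by exact_mod_cast hn)
  simp only [bsMul, Prod.ext_iff, zpow_neg]
  constructor
  · rintro ⟨h₁, h₂⟩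
    refine ⟨?_, by omega⟩
    field_simp at h₁
    linarith
  · rintro ⟨h₁, h₂⟩
    refine ⟨?_, by omega⟩
    rw [h₁]
    field_simp
    ring

theorem bsConj_eq (hn : n ≠ 0) (w c : ℚ × ℤ) :
    bsConj n w c = ((n : ℚ) ^ w.2 * (c.1 + w.1 * ((n : ℚ) ^ (-c.2) - 1)), c.2) := by
  have hn' : (n : ℚ) ≠ 0 := by exact_mod_cast hn
  simp only [bsConj, bsMul, bsInv, Prod.ext_iff]
  refine ⟨?_, by ring⟩
  simp only [neg_neg, neg_add_rev, zpow_add₀ hn', zpow_neg]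
  field_simp
  ring

@[simp]
theorem bsConj_snd (w c : ℚ × ℤ) : (bsConj n w c).2 = c.2 := by
  simp [bsConj, bsMul, bsInv]

theorem bsConj_zero_fst (y : ℤ) (c : ℚ × ℤ) : bsConj n (0, y) c = ((n : ℚ) ^ y * c.1, c.2) := by
  simp [bsConj, bsMul, bsInv]

theorem conjProd_succ {k : ℕ} (c z : Fin (k + 1) → ℚ × ℤ) :
    conjProd n c z =
      bsMul n (bsConj n (z 0) (c 0)) (conjProd n (fun i => c i.succ) fun i => z i.succ) := by
  simp [conjProd, List.ofFn_succ]

theorem conjProd_of_fst_eq_zero {k : ℕ} (c z : Fin k → ℚ × ℤ)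
    (h : ∀ i, (bsConj n (z i) (c i)).1 = 0) : conjProd n c z = (0, ∑ i, (c i).2) := by
  induction k with
  | zero => simp [conjProd]
  | succ k ih =>
    rw [conjProd_succ, ih _ _ fun i => h i.succ, Fin.sum_univ_succ]
    simp [bsMul, h 0]

theorem bsMul_zpow_mul_sum (hn : n ≠ 0) {k : ℕ} (a : ℤ) (t : ℚ) (b : ℤ) (x : Fin k → ℤ)
    (s : Fin k → ℚ) (S : ℤ) :
    bsMul n ((n : ℚ) ^ a * t, b) (∑ i, (n : ℚ) ^ x i * s i, S) =
      (∑ i, (n : ℚ) ^ (Fin.cons a (fun i => x i - b) : Fin (k + 1) → ℤ) i *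
        (Fin.cons t s : Fin (k + 1) → ℚ) i, b + S) := by
  have hn' : (n : ℚ) ≠ 0 := by exact_mod_cast hn
  simp only [bsMul, Fin.sum_univ_succ, Fin.cons_zero, Fin.cons_succ, Finset.mul_sum, sub_eq_add_neg,
    zpow_add₀ hn', Prod.mk.injEq, and_true]
  congr 1
  exact Finset.sum_congr rfl fun i _ => by ring

theorem conjProd_eq_sum (hn : n ≠ 0) {k : ℕ} (c z : Fin k → ℚ × ℤ) :
    ∃ x : Fin k → ℤ, conjProd n c z =
      (∑ i, (n : ℚ) ^ x i * ((c i).1 + (z i).1 * ((n : ℚ) ^ (-(c i).2) - 1)), ∑ i, (c i).2) := by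
  induction k with
  | zero => exact ⟨Fin.elim0, by simp [conjProd]⟩
  | succ k ih =>
    obtain ⟨x, hx⟩ := ih (fun i => c i.succ) (fun i => z i.succ)
    refine ⟨Fin.cons (z 0).2 fun i => x i - (c 0).2, ?_⟩
    rw [conjProd_succ, bsConj_eq hn, hx, bsMul_zpow_mul_sum hn, Fin.sum_univ_succ (fun i => (c i).2)]
    congr 2
    funext i
    exact Fin.cases rfl (fun i => rfl) i

theorem exists_conjProd_eq_sum (hn : n ≠ 0) {k : ℕ} (c : Fin k → ℚ × ℤ) (v : Fin k → ℚ)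
    (x : Fin k → ℤ) :
    ∃ y : Fin k → ℤ, conjProd n c (fun i => (v i, y i)) =
      (∑ i, (n : ℚ) ^ x i * ((c i).1 + v i * ((n : ℚ) ^ (-(c i).2) - 1)), ∑ i, (c i).2) := by
  induction k with
  | zero => exact ⟨Fin.elim0, by simp [conjProd]⟩
  | succ k ih =>
    obtain ⟨y, hy⟩ := ih (fun i => c i.succ) (fun i => v i.succ) (fun i => x i.succ + (c 0).2)
    refine ⟨Fin.cons (x 0) y, ?_⟩
    simp only [conjProd_succ, Fin.cons_zero, Fin.cons_succ]
    rw [bsConj_eq hn, hy, bsMul_zpow_mul_sum hn, Fin.sum_univ_succ (fun i => (c i).2)]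
    congr 2
    funext i
    refine Fin.cases rfl (fun i => ?_) i
    simp

end

def SqConjProdSolvable (n : ℤ) {k : ℕ} (c : Fin k → ℚ × ℤ) : Prop :=
  ∃ x : ℚ × ℤ, x.1 ∈ zInvSubring n ∧ ∃ z : Fin k → ℚ × ℤ, (∀ i, (z i).1 ∈ zInvSubring n) ∧
    bsMul n (bsMul n x x) (conjProd n c z) = (0, 0)

theorem sqConjProdSolvable_zero {k : ℕ} (c : Fin k → ℚ × ℤ) {m : ℤ}
    (hm : m + m = -∑ i, (c i).2) : SqConjProdSolvable 0 c := by
  refine ⟨(0, m), zero_mem _, fun _ => (0, 1), fun _ => zero_mem _, ?_⟩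
  rw [conjProd_of_fst_eq_zero _ _ fun i => by simp [bsConj_zero_fst]]
  simp [bsMul, hm]

section

variable {n : ℤ}

local notation "R" => zInvSubring n

variable {k : ℕ} {α : Fin k → ℚ} {β : Fin k → ℤ} {m : ℤ}

local notation "I" => Submodule.span R (insert (1 + (n : ℚ) ^ (-m))
  (Set.range fun i => (n : ℚ) ^ (-β i) - 1))

theorem SqConjProdSolvable.exists_mem_span (hn : n ≠ 0) (hm : m + m = -∑ i, β i)
    (h : SqConjProdSolvable n (fun i => (α i, β i))) : ∃ e : Fin k → ℤ, ∑ i, α i * (n : ℚ) ^ e i ∈ I := by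
  obtain ⟨x, hx, z, hz, h⟩ := h
  obtain ⟨e, he⟩ := conjProd_eq_sum hn (fun i => (α i, β i)) z
  rw [bsMul_eq_zero_iff hn, bsMul_self, he] at h
  obtain ⟨h₁, h₂⟩ := h
  simp only at h₁ h₂
  obtain rfl : x.2 = m := by omega
  refine ⟨e, ?_⟩
  have hsum : ∑ i, α i * (n : ℚ) ^ e i = -(n : ℚ) ^ (x.2 + x.2) * x.1 * (1 + (n : ℚ) ^ (-x.2)) -
      ∑ i, (n : ℚ) ^ e i * (z i).1 * ((n : ℚ) ^ (-β i) - 1) := by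
    rw [mul_assoc, ← h₁, ← Finset.sum_sub_distrib]
    exact Finset.sum_congr rfl fun i _ => by ring
  rw [hsum]
  refine Submodule.sub_mem _ (Subring.mul_mem_span _ ?_ (Set.mem_insert _ _))
    (Submodule.sum_mem _ fun i _ => Subring.mul_mem_span _ ?_ (Set.mem_insert_of_mem _ ⟨i, rfl⟩))
  · exact mul_mem (neg_mem (zInvSubring.zpow_mem hn _)) hx
  · exact mul_mem (zInvSubring.zpow_mem hn _) (hz i)

theorem sqConjProdSolvable_of_mem_span (hn : n ≠ 0) (hm : m + m = -∑ i, β i) (e : Fin k → ℤ)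
    (he : ∑ i, α i * (n : ℚ) ^ e i ∈ I) : SqConjProdSolvable n (fun i => (α i, β i)) := by
  have hn' : (n : ℚ) ≠ 0 := by exact_mod_cast hn
  obtain ⟨a, w, hw, hsum⟩ := Submodule.mem_span_insert.1 he
  obtain ⟨d, rfl⟩ := (Submodule.mem_span_range_iff_exists_fun R).1 hw
  simp only [Subring.smul_def, smul_eq_mul] at hsum
  obtain ⟨y, hy⟩ := exists_conjProd_eq_sum hn (fun i => (α i, β i))
    (fun i => -((n : ℚ) ^ (-e i) * d i)) e
  refine ⟨(-(n : ℚ) ^ (-(m + m)) * a, m), mul_mem (neg_mem (zInvSubring.zpow_mem hn _)) a.2,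
    fun i => (-((n : ℚ) ^ (-e i) * d i), y i),
    fun i => neg_mem (mul_mem (zInvSubring.zpow_mem hn _) (d i).2), ?_⟩
  rw [bsMul_eq_zero_iff hn, bsMul_self, hy]
  refine ⟨?_, by simp only; omega⟩
  have hterm : ∀ i, (n : ℚ) ^ e i * (α i + -((n : ℚ) ^ (-e i) * d i) * ((n : ℚ) ^ (-β i) - 1)) =
      α i * (n : ℚ) ^ e i - d i * ((n : ℚ) ^ (-β i) - 1) := by
    intro i
    rw [zpow_neg]
    field_simp
    ring
  calc ∑ i, (n : ℚ) ^ e i * (α i + -((n : ℚ) ^ (-e i) * d i) * ((n : ℚ) ^ (-β i) - 1))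
      = ∑ i, α i * (n : ℚ) ^ e i - ∑ i, d i * ((n : ℚ) ^ (-β i) - 1) := by
        rw [← Finset.sum_sub_distrib]
        exact Finset.sum_congr rfl fun i _ => hterm i
    _ = a * (1 + (n : ℚ) ^ (-m)) := by rw [hsum]; ring
    _ = -(n : ℚ) ^ (m + m) * (-(n : ℚ) ^ (-(m + m)) * a * (1 + (n : ℚ) ^ (-m))) := by
        simp only [zpow_neg]
        field_simp

theorem sqConjProdSolvable_iff (hn : n ≠ 0) (hm : m + m = -∑ i, β i) :
    SqConjProdSolvable n (fun i => (α i, β i)) ↔ ∃ e : Fin k → ℤ, ∑ i, α i * (n : ℚ) ^ e i ∈ I :=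
  ⟨SqConjProdSolvable.exists_mem_span hn hm, fun ⟨e, he⟩ => sqConjProdSolvable_of_mem_span hn hm e he⟩

end

theorem stmt_18_general (n : ℤ) (k : ℕ) (α : Fin k → ℚ) (β : Fin k → ℤ)
    (hEven : Even (∑ i, β i)) :
    (∃ x : ℚ × ℤ, inZinv n x.1 ∧ ∃ z : Fin k → ℚ × ℤ,
        (∀ i, inZinv n (z i).1) ∧
        bsMul n (bsMul n x x)
            ((List.ofFn fun i =>
                bsMul n (bsMul n (bsInv n (z i)) (α i, β i)) (z i)).foldr
              (bsMul n) (0, 0)) = (0, 0)) ↔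
      ((∑ i, β i) % 2 = 0) ∧
        ∃ x : Fin k → ℤ, ∃ γ : ℚ, inZinv n γ ∧
          ∑ i, α i * (n : ℚ) ^ (x i) =
            γ * (Int.gcd (n ^ (-(∑ i, β i) / 2).natAbs + 1)
              (n ^ (Finset.univ.gcd fun i => (β i).natAbs) - 1) : ℚ) := by
  have hm : -(∑ i, β i) / 2 + -(∑ i, β i) / 2 = -∑ i, β i := by
    obtain ⟨r, hr⟩ := hEven
    omega
  rw [and_iff_right (Int.even_iff.1 hEven)]
  rcases eq_or_ne n 0 with rfl | hn
  · have hK : (Int.gcd ((0 : ℤ) ^ (-(∑ i, β i) / 2).natAbs + 1)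
        ((0 : ℤ) ^ (Finset.univ.gcd fun i => (β i).natAbs) - 1) : ℚ) ≠ 0 :=
      Nat.cast_ne_zero.2 (Int.gcd_pos_of_ne_zero_left _ (by positivity)).ne'
    exact iff_of_true (sqConjProdSolvable_zero (fun i => (α i, β i)) hm)
      ⟨0, _, inZinv_zero _, (div_mul_cancel₀ _ hK).symm⟩
  · refine (sqConjProdSolvable_iff hn hm).trans (exists_congr fun e => ?_)
    rw [zInvSubring.span_insert_range_eq_span_gcd hn, Subring.mem_span_singleton_iff]
    rfl

/-- The nonorientable genus-1 equation `x² ∏ᵢ zᵢ⁻¹cᵢzᵢ = 1` over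
BS(1,n) ≅ ℤ[1/n] ⋊ ℤ, with `cᵢ = (αᵢ, βᵢ)`, `Σβᵢ` even,
`β_x = -(1/2)Σβᵢ`, `β = gcd(|β₁|,…,|β_k|)` and
`K = gcd(n^{|β_x|}+1, n^β-1)`, has a solution iff `Σβᵢ ≡ 0 (mod 2)` and
there are integers `x₁,…,x_k` with `Σ αᵢn^{xᵢ} ≡ 0 (mod K)` in ℤ[1/n]. -/
theorem stmt_18 (n : ℤ) (k : ℕ) (α : Fin k → ℚ) (β : Fin k → ℤ)
    (hα : ∀ i, inZinv n (α i)) (hEven : Even (∑ i, β i)) :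
    (∃ x : ℚ × ℤ, inZinv n x.1 ∧ ∃ z : Fin k → ℚ × ℤ,
        (∀ i, inZinv n (z i).1) ∧
        bsMul n (bsMul n x x)
            ((List.ofFn fun i =>
                bsMul n (bsMul n (bsInv n (z i)) (α i, β i)) (z i)).foldr
              (bsMul n) (0, 0)) = (0, 0)) ↔
      ((∑ i, β i) % 2 = 0) ∧
        ∃ x : Fin k → ℤ, ∃ γ : ℚ, inZinv n γ ∧
          ∑ i, α i * (n : ℚ) ^ (x i) =
            γ * (Int.gcd (n ^ (-(∑ i, β i) / 2).natAbs + 1)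
              (n ^ (Finset.univ.gcd fun i => (β i).natAbs) - 1) : ℚ) :=
  stmt_18_general n k α β hEven
end
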